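/- arXiv:2310.05466 — 2 statements merged into one kernel-verified Lean document; each statement's English description precedes it below -/
import Mathlib

section
/- Let f : ℝ_{>0}^n → ℝ, f(x) = ∑_{μ ∈ σ(f)} c_μ x^μ be a signomial such that σ_+(f) has a pair of strict enclosing hyperplanes (H_{v,a}, H_{v,b}) with a ≥ b. If there exist negative exponent vectors β₁, β₂ ∈ σ_-(f) with β₁ ∈ H^+_{v,a}, β₂ ∈ H^-_{v,b}, and Conv({β₁, β₂}) ∩ Conv(σ_+(f)) = ∅, then f^{-1}(ℝ_{<0}) is non-empty and connected. -/
open Finset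

/-- The signomial `x ↦ ∑_{μ ∈ S} c μ * x^μ` (with real exponents, via `Real.rpow`). -/
noncomputable def sig {n : ℕ} (S : Finset (Fin n → ℝ)) (c : (Fin n → ℝ) → ℝ)
    (x : Fin n → ℝ) : ℝ :=
  ∑ μ ∈ S, c μ * ∏ i, x i ^ μ i

open Classical in
/-- The restriction `f|_F` of the signomial to a subset `F ⊆ ℝⁿ` of exponent vectors. -/
noncomputable def sigOn {n : ℕ} (S : Finset (Fin n → ℝ)) (c : (Fin n → ℝ) → ℝ)
    (F : Set (Fin n → ℝ)) (x : Fin n → ℝ) : ℝ :=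
  ∑ μ ∈ S, if μ ∈ F then c μ * ∏ i, x i ^ μ i else 0

/-- `f⁻¹(ℝ_{<0})`: the points of the positive orthant where the signomial is negative. -/
def negSet {n : ℕ} (S : Finset (Fin n → ℝ)) (c : (Fin n → ℝ) → ℝ) : Set (Fin n → ℝ) :=
  {x | (∀ i, 0 < x i) ∧ sig S c x < 0}

/-- `(f|_F)⁻¹(ℝ_{<0})`. -/
def negSetOn {n : ℕ} (S : Finset (Fin n → ℝ)) (c : (Fin n → ℝ) → ℝ)
    (F : Set (Fin n → ℝ)) : Set (Fin n → ℝ) :=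
  {x | (∀ i, 0 < x i) ∧ sigOn S c F x < 0}

/-- `σ₊(f)`: the positive exponent vectors. -/
def sigPosSet {n : ℕ} (S : Finset (Fin n → ℝ)) (c : (Fin n → ℝ) → ℝ) : Set (Fin n → ℝ) :=
  {μ | μ ∈ S ∧ 0 < c μ}

/-- `σ₋(f)`: the negative exponent vectors. -/
def sigNegSet {n : ℕ} (S : Finset (Fin n → ℝ)) (c : (Fin n → ℝ) → ℝ) : Set (Fin n → ℝ) :=
  {μ | μ ∈ S ∧ c μ < 0}

/-- The hyperplane `H_{v,a}`. -/
def Hyp {n : ℕ} (v : Fin n → ℝ) (a : ℝ) : Set (Fin n → ℝ) :=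
  {μ | ∑ i, v i * μ i = a}

/-- The closed half-space `H⁺_{v,a}`. -/
def Hplus {n : ℕ} (v : Fin n → ℝ) (a : ℝ) : Set (Fin n → ℝ) :=
  {μ | a ≤ ∑ i, v i * μ i}

/-- The closed half-space `H⁻_{v,a}`. -/
def Hminus {n : ℕ} (v : Fin n → ℝ) (a : ℝ) : Set (Fin n → ℝ) :=
  {μ | ∑ i, v i * μ i ≤ a}

/-- The open half-space `H^{+,∘}_{v,a}`. -/
def HplusO {n : ℕ} (v : Fin n → ℝ) (a : ℝ) : Set (Fin n → ℝ) :=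
  {μ | a < ∑ i, v i * μ i}

/-- The open half-space `H^{-,∘}_{v,a}`. -/
def HminusO {n : ℕ} (v : Fin n → ℝ) (a : ℝ) : Set (Fin n → ℝ) :=
  {μ | ∑ i, v i * μ i < a}

/-- `U` is a connected component of `X` (a maximal nonempty preconnected subset of `X`). -/
def IsConnComp {n : ℕ} (X U : Set (Fin n → ℝ)) : Prop :=
  U.Nonempty ∧ U ⊆ X ∧ IsPreconnected U ∧
    ∀ W, U ⊆ W → W ⊆ X → IsPreconnected W → W = U

/-- The number (cardinality) of connected components of `X`. -/
noncomputable def compCard {n : ℕ} (X : Set (Fin n → ℝ)) : Cardinal :=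
  Cardinal.mk {U : Set (Fin n → ℝ) // IsConnComp X U}

/-- The face `N(f)_v` of the Newton polytope of a signomial with support `S`,
with outer normal vector `v`. -/
def faceOf {n : ℕ} (S : Finset (Fin n → ℝ)) (v : Fin n → ℝ) : Set (Fin n → ℝ) :=
  {ω ∈ convexHull ℝ (↑S : Set (Fin n → ℝ)) |
    ∀ μ ∈ convexHull ℝ (↑S : Set (Fin n → ℝ)), ∑ i, v i * μ i ≤ ∑ i, v i * ω i}

/-!
In logarithmic coordinates `x = exp y` the signomial becomes the exponential sum
`F y = ∑ c μ * exp (y ⬝ᵥ μ)`, so it suffices to show that `{F < 0}` is path-connected.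

Along a line `y + t • v` the coefficients have signs `-, +, -` relative to the slab
`b ≤ v ⬝ᵥ μ ≤ a`. This makes `t ↦ exp (-b t) * F (y + t • v)` quasiconcave: its derivative is
`exp ((a - b) t)` times a function whose derivative `∑ K μ (A μ - a) (A μ - b) exp (…)` is
nonpositive. Hence one of the two rays from a point of `{F < 0}` in the directions `±v` stays in
`{F < 0}`.

A vector `w` strictly separating `Conv σ₊(f)` from `{β₁, β₂}` makes `β₁` (for `t ≥ 0`) or `β₂`
(for `t ≤ 0`) dominate every positive term at `z + s • w + t • v` once `s` is large, uniformly for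
`z` in a compact set. Likewise the negative exponents beyond the enclosing hyperplanes dominate
far out along `±v`. So every point of `{F < 0}` is joined to a far translate `y + s • w`, and two
such translates are joined by a segment.
-/

open Real Filter Topology

section ExpPoly

variable {ι : Type*} (s : Finset ι) (K A : ι → ℝ)

noncomputable def expPoly (t : ℝ) : ℝ := ∑ i ∈ s, K i * exp (A i * t)

variable {s K A}

theorem hasDerivAt_expPoly (t : ℝ) :
    HasDerivAt (expPoly s K A) (expPoly s (fun i => K i * A i) A t) t := by
  unfold expPoly
  refine HasDerivAt.fun_sum fun i _ => ?_
  simpa [mul_comm, mul_left_comm, mul_assoc] using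
    (((hasDerivAt_id t).const_mul (A i)).exp.const_mul (K i))

theorem exp_mul_expPoly {B : ι → ℝ} {e : ℝ} (hB : ∀ i, B i = A i + e) (t : ℝ) :
    exp (e * t) * expPoly s K A t = expPoly s K B t := by
  simp only [expPoly, Finset.mul_sum, hB]
  refine Finset.sum_congr rfl fun i _ => ?_
  rw [mul_left_comm, ← exp_add]
  ring_nf

theorem expPoly_neg_or_neg {a b : ℝ} (h : ∀ i ∈ s, K i * ((A i - a) * (A i - b)) ≤ 0)
    {t₁ t t₂ : ℝ} (h₁ : t₁ ≤ t) (h₂ : t ≤ t₂) (ht : expPoly s K A t < 0) :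
    expPoly s K A t₁ < 0 ∨ expPoly s K A t₂ < 0 := by
  set φ := expPoly s K fun i => A i - b
  set ψ := expPoly s (fun i => K i * (A i - b)) fun i => A i - a
  have hφ : ∀ x, HasDerivAt φ (exp ((a - b) * x) * ψ x) x := fun x => by
    rw [exp_mul_expPoly (B := fun i => A i - b) fun i => by ring]
    exact hasDerivAt_expPoly x
  have hψ : Antitone ψ := antitone_of_hasDerivAt_nonpos (fun x => hasDerivAt_expPoly x)
    fun x => Finset.sum_nonpos fun i hi => by
      have := mul_nonpos_of_nonpos_of_nonneg (h i hi) (exp_pos ((A i - a) * x)).le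
      simpa [mul_assoc, mul_comm, mul_left_comm] using this
  have sign : ∀ x, expPoly s K A x < 0 ↔ φ x < 0 := fun x => by
    have hx : φ x = exp (-b * x) * expPoly s K A x := (exp_mul_expPoly (fun i => by ring) x).symm
    simp [hx, mul_neg_iff, exp_pos, (exp_pos _).not_gt]
  rw [sign] at ht
  rw [sign, sign]
  rcases le_total 0 (ψ t) with hψt | hψt
  · left
    refine lt_of_le_of_lt (monotoneOn_of_hasDerivWithinAt_nonneg (convex_Icc t₁ t)
      (fun x _ => (hφ x).continuousAt.continuousWithinAt) (fun x _ => (hφ x).hasDerivWithinAt)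
      (fun x hx => ?_) ⟨le_rfl, h₁⟩ ⟨h₁, le_rfl⟩ h₁) ht
    rw [interior_Icc] at hx
    exact mul_nonneg (exp_pos _).le (hψt.trans (hψ hx.2.le))
  · right
    refine lt_of_le_of_lt (antitoneOn_of_hasDerivWithinAt_nonpos (convex_Icc t t₂)
      (fun x _ => (hφ x).continuousAt.continuousWithinAt) (fun x _ => (hφ x).hasDerivWithinAt)
      (fun x hx => ?_) ⟨le_rfl, h₂⟩ ⟨h₂, le_rfl⟩ h₂) ht
    rw [interior_Icc] at hx
    exact mul_nonpos_of_nonneg_of_nonpos (exp_pos _).le ((hψ hx.1.le).trans hψt)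

end ExpPoly

section Rays

variable {E : Type*} [AddCommGroup E] [Module ℝ E]

theorem segment_add_smul_subset {Y : Set E} {x u : E} {t₁ t₂ : ℝ}
    (h : ∀ t ∈ Set.uIcc t₁ t₂, x + t • u ∈ Y) : segment ℝ (x + t₁ • u) (x + t₂ • u) ⊆ Y := by
  rintro _ ⟨α, β, hα, hβ, hαβ, rfl⟩
  have hcomb : α • (x + t₁ • u) + β • (x + t₂ • u) = x + (α * t₁ + β * t₂) • u := by
    rw [smul_add, smul_add, smul_smul, smul_smul, add_add_add_comm, ← add_smul, hαβ, one_smul,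
      ← add_smul]
  rw [hcomb]
  exact h _ (segment_subset_uIcc _ _ ⟨α, β, hα, hβ, hαβ, by simp only [smul_eq_mul]⟩)

theorem segment_add_const_subset {Y : Set E} {x y c : E}
    (h : ∀ p ∈ segment ℝ x y, p + c ∈ Y) : segment ℝ (x + c) (y + c) ⊆ Y := by
  rw [add_comm x, add_comm y, ← segment_translate_image]
  rintro _ ⟨p, hp, rfl⟩
  show c + p ∈ Y
  rw [add_comm]
  exact h p hp

variable [TopologicalSpace E] [IsTopologicalAddGroup E] [ContinuousSMul ℝ E]

theorem isCompact_segment (x y : E) : IsCompact (segment ℝ x y) := by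
  rw [← convexHull_pair (𝕜 := ℝ)]
  exact (Set.toFinite _).isCompact_convexHull ℝ

theorem joinedIn_of_ray {Y : Set E} {z x u : E} {T : ℝ} (hT : 0 ≤ T)
    (hray : ∀ t : ℝ, 0 ≤ t → z + t • u ∈ Y) (hfar : ∀ p ∈ segment ℝ z x, p + T • u ∈ Y)
    (hline : ∀ t : ℝ, x + t • u ∈ Y) : JoinedIn Y z x := by
  have out : JoinedIn Y z (z + T • u) := .of_segment_subset <| by
    simpa using segment_add_smul_subset (x := z) (u := u) (t₁ := 0) (t₂ := T)
      fun t ht => hray t (Set.uIcc_of_le hT ▸ ht).1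
  have across : JoinedIn Y (z + T • u) (x + T • u) :=
    .of_segment_subset (segment_add_const_subset hfar)
  have back : JoinedIn Y (x + T • u) x := .of_segment_subset <| by
    simpa using segment_add_smul_subset (x := x) (u := u) (t₁ := T) (t₂ := 0) fun t _ => hline t
  exact out.trans (across.trans back)

theorem isPathConnected_of_rays {Y : Set E} {v w : E}
    (hray : ∀ y ∈ Y, ∃ u ∈ ({v, -v} : Set E), ∀ t : ℝ, 0 ≤ t → y + t • u ∈ Y)
    (hfar : ∀ u ∈ ({v, -v} : Set E), ∀ K : Set E, IsCompact K →
      ∀ᶠ T : ℝ in atTop, ∀ p ∈ K, p + T • u ∈ Y)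
    (hstrip : ∀ K : Set E, IsCompact K → ∃ s : ℝ, ∀ p ∈ K, ∀ t : ℝ, p + s • w + t • v ∈ Y) :
    IsPathConnected Y := by
  rw [isPathConnected_iff]
  refine ⟨?_, fun y hy y' hy' => ?_⟩
  · obtain ⟨s, hs⟩ := hstrip {0} isCompact_singleton
    exact ⟨_, hs 0 rfl 0⟩
  obtain ⟨s, hs⟩ := hstrip _ (isCompact_segment y y')
  have side : ∀ z ∈ segment ℝ y y', z ∈ Y → JoinedIn Y z (z + s • w) := by
    intro z hz hzY
    obtain ⟨u, hu, hray⟩ := hray z hzY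
    obtain ⟨T, hT, hT0⟩ :=
      ((hfar u hu _ (isCompact_segment z (z + s • w))).and (eventually_ge_atTop (0 : ℝ))).exists
    refine joinedIn_of_ray hT0 hray hT fun t => ?_
    rcases hu with rfl | rfl
    · exact hs z hz t
    · simpa using hs z hz (-t)
  have mid : JoinedIn Y (y + s • w) (y' + s • w) :=
    .of_segment_subset <| segment_add_const_subset fun p hp => by simpa using hs p hp 0
  exact (side y (left_mem_segment _ _ _) hy).trans
    (mid.trans (side y' (right_mem_segment _ _ _) hy').symm)

end Rays

theorem exists_dotProduct_lt_of_disjoint_convexHull {ι : Type*} [Fintype ι] {P Q : Set (ι → ℝ)}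
    (hP : P.Finite) (hQ : Q.Finite) (h : Disjoint (convexHull ℝ P) (convexHull ℝ Q)) :
    ∃ w : ι → ℝ, ∀ μ ∈ P, ∀ β ∈ Q, w ⬝ᵥ μ < w ⬝ᵥ β := by
  classical
  obtain ⟨f, u, u', hfu, huu', hfu'⟩ := geometric_hahn_banach_compact_closed
    (convex_convexHull ℝ P) (hP.isCompact_convexHull ℝ) (convex_convexHull ℝ Q)
    (hQ.isCompact_convexHull ℝ).isClosed h
  have hf : ∀ x, (fun i => f fun j => if i = j then 1 else 0) ⬝ᵥ x = f x := fun x => by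
    rw [dotProduct_comm]
    exact (LinearMap.pi_apply_eq_sum_univ (f : (ι → ℝ) →ₗ[ℝ] ℝ) x).symm
  refine ⟨fun i => f fun j => if i = j then 1 else 0, fun μ hμ β hβ => ?_⟩
  rw [hf, hf]
  exact ((hfu μ (subset_convexHull ℝ P hμ)).trans huu').trans (hfu' β (subset_convexHull ℝ Q hβ))

section LogCoordinates

variable {n : ℕ} {S : Finset (Fin n → ℝ)} {c : (Fin n → ℝ) → ℝ}

variable (S c) in
noncomputable def expSum (y : Fin n → ℝ) : ℝ := ∑ μ ∈ S, c μ * exp (y ⬝ᵥ μ)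

theorem sig_exp (y : Fin n → ℝ) : sig S c (fun i => exp (y i)) = expSum S c y := by
  refine Finset.sum_congr rfl fun μ _ => ?_
  simp only [← exp_mul, ← exp_sum, dotProduct]

theorem negSet_eq_image : negSet S c = (fun y i => exp (y i)) '' {y | expSum S c y < 0} := by
  ext x
  constructor
  · rintro ⟨hx, hneg⟩
    have hexp : (fun i => exp (log (x i))) = x := funext fun i => exp_log (hx i)
    refine ⟨fun i => log (x i), ?_, hexp⟩
    show expSum S c _ < 0
    rwa [← sig_exp, hexp]
  · rintro ⟨y, hy, rfl⟩
    exact ⟨fun i => exp_pos _, by rwa [sig_exp]⟩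

theorem expSum_add_smul (y v : Fin n → ℝ) (t : ℝ) :
    expSum S c (y + t • v) = expPoly S (fun μ => c μ * exp (y ⬝ᵥ μ)) (fun μ => v ⬝ᵥ μ) t := by
  refine Finset.sum_congr rfl fun μ _ => ?_
  rw [add_dotProduct, smul_dotProduct, smul_eq_mul, exp_add, mul_comm t, mul_assoc]

theorem coeff_mul_nonpos_of_enclosing {v : Fin n → ℝ} {a b : ℝ} (hab : b ≤ a)
    (hpos : sigPosSet S c ⊆ Hminus v a ∩ Hplus v b)
    (hneg : sigNegSet S c ⊆ (HminusO v a ∩ HplusO v b)ᶜ) :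
    ∀ μ ∈ S, c μ * ((v ⬝ᵥ μ - a) * (v ⬝ᵥ μ - b)) ≤ 0 := by
  intro μ hμ
  rcases lt_trichotomy (c μ) 0 with hc | hc | hc
  · have hout : ¬(v ⬝ᵥ μ < a ∧ b < v ⬝ᵥ μ) := hneg ⟨hμ, hc⟩
    rw [not_and_or, not_lt, not_lt] at hout
    refine mul_nonpos_of_nonpos_of_nonneg hc.le ?_
    rcases hout with h | h <;> nlinarith
  · simp [hc]
  · obtain ⟨ha, hb⟩ := hpos ⟨hμ, hc⟩
    exact mul_nonpos_of_nonneg_of_nonpos hc.le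
      (mul_nonpos_of_nonpos_of_nonneg (sub_nonpos.2 ha) (sub_nonneg.2 hb))

theorem expSum_add_smul_neg_or {v y : Fin n → ℝ} {a b : ℝ}
    (hsign : ∀ μ ∈ S, c μ * ((v ⬝ᵥ μ - a) * (v ⬝ᵥ μ - b)) ≤ 0) (hy : expSum S c y < 0) :
    (∀ t : ℝ, 0 ≤ t → expSum S c (y + t • v) < 0) ∨
      ∀ t : ℝ, 0 ≤ t → expSum S c (y + t • -v) < 0 := by
  simp only [smul_neg, ← neg_smul, expSum_add_smul]
  by_contra! h
  obtain ⟨⟨t₂, ht₂, h₂⟩, t₁, ht₁, h₁⟩ := h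
  have h₀ : expPoly S (fun μ => c μ * exp (y ⬝ᵥ μ)) (fun μ => v ⬝ᵥ μ) 0 < 0 := by
    simpa [expPoly, expSum] using hy
  have hsign' : ∀ μ ∈ S, c μ * exp (y ⬝ᵥ μ) * ((v ⬝ᵥ μ - a) * (v ⬝ᵥ μ - b)) ≤ 0 :=
    fun μ hμ => by
      rw [mul_right_comm]
      exact mul_nonpos_of_nonpos_of_nonneg (hsign μ hμ) (exp_pos _).le
  rcases expPoly_neg_or_neg hsign' (neg_nonpos.2 ht₁) ht₂ h₀ with h | h <;> linarith

theorem expSum_neg_of_sum_lt {β y : Fin n → ℝ} (hβ : β ∈ S) (hcβ : c β < 0)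
    (h : ∑ μ ∈ S with 0 < c μ, c μ * exp (y ⬝ᵥ μ - y ⬝ᵥ β) < -c β) : expSum S c y < 0 := by
  have hβ' : β ∈ S.filter (¬ 0 < c ·) := Finset.mem_filter.2 ⟨hβ, hcβ.not_gt⟩
  have hrest : ∑ μ ∈ (S.filter (¬ 0 < c ·)).erase β, c μ * exp (y ⬝ᵥ μ) ≤ 0 :=
    Finset.sum_nonpos fun μ hμ => mul_nonpos_of_nonpos_of_nonneg
      (not_lt.1 (Finset.mem_filter.1 (Finset.mem_of_mem_erase hμ)).2) (exp_pos _).le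
  have hpos : ∑ μ ∈ S with 0 < c μ, c μ * exp (y ⬝ᵥ μ) < -c β * exp (y ⬝ᵥ β) := by
    calc ∑ μ ∈ S with 0 < c μ, c μ * exp (y ⬝ᵥ μ)
        = exp (y ⬝ᵥ β) * ∑ μ ∈ S with 0 < c μ, c μ * exp (y ⬝ᵥ μ - y ⬝ᵥ β) := by
          rw [Finset.mul_sum]
          refine Finset.sum_congr rfl fun μ _ => ?_
          rw [mul_left_comm, ← exp_add, add_sub_cancel]
      _ < exp (y ⬝ᵥ β) * -c β := mul_lt_mul_of_pos_left h (exp_pos _)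
      _ = -c β * exp (y ⬝ᵥ β) := mul_comm _ _
  rw [expSum, ← Finset.sum_filter_add_sum_filter_not S (0 < c ·),
    ← Finset.add_sum_erase _ _ hβ']
  linarith

theorem eventually_forall_expSum_neg {β w : Fin n → ℝ} (hβ : β ∈ S) (hcβ : c β < 0)
    (hw : ∀ μ ∈ S, 0 < c μ → w ⬝ᵥ μ < w ⬝ᵥ β) {K : Set (Fin n → ℝ)} (hK : IsCompact K) :
    ∀ᶠ s : ℝ in atTop, ∀ z ∈ K, ∀ d : Fin n → ℝ, (∀ μ ∈ S, 0 < c μ → d ⬝ᵥ μ ≤ d ⬝ᵥ β) →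
      expSum S c (z + s • w + d) < 0 := by
  have hbdd : ∀ μ, ∃ B, ∀ z ∈ K, z ⬝ᵥ μ - z ⬝ᵥ β ≤ B := fun μ =>
    (hK.bddAbove_image (f := fun z => z ⬝ᵥ μ - z ⬝ᵥ β) (Continuous.continuousOn (by fun_prop))).imp
      fun B hB z hz => hB ⟨z, hz, rfl⟩
  choose B hB using hbdd
  have hlim : Tendsto (fun s : ℝ => ∑ μ ∈ S with 0 < c μ,
      c μ * exp (B μ + s * (w ⬝ᵥ μ - w ⬝ᵥ β))) atTop (𝓝 0) := by
    have hterm : ∀ μ ∈ S.filter (fun μ => 0 < c μ),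
        Tendsto (fun s : ℝ => c μ * exp (B μ + s * (w ⬝ᵥ μ - w ⬝ᵥ β))) atTop (𝓝 0) := by
      intro μ hμ
      obtain ⟨hμS, hcμ⟩ := Finset.mem_filter.1 hμ
      simpa using ((tendsto_exp_atBot.comp (tendsto_atBot_add_const_left _ _
        (tendsto_id.atTop_mul_const_of_neg (sub_neg.2 (hw μ hμS hcμ))))).const_mul (c μ))
    simpa using tendsto_finsetSum _ hterm
  filter_upwards [hlim.eventually_lt_const (neg_pos.2 hcβ)] with s hs z hz d hd
  refine expSum_neg_of_sum_lt hβ hcβ ((Finset.sum_le_sum fun μ hμ => ?_).trans_lt hs)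
  obtain ⟨hμS, hcμ⟩ := Finset.mem_filter.1 hμ
  gcongr
  simp only [add_dotProduct, smul_dotProduct, smul_eq_mul]
  linarith [hB μ z hz, hd μ hμS hcμ]

theorem eventually_forall_expSum_add_smul_neg {β w : Fin n → ℝ} (hβ : β ∈ S) (hcβ : c β < 0)
    (hw : ∀ μ ∈ S, 0 < c μ → w ⬝ᵥ μ < w ⬝ᵥ β) {K : Set (Fin n → ℝ)} (hK : IsCompact K) :
    ∀ᶠ s : ℝ in atTop, ∀ z ∈ K, expSum S c (z + s • w) < 0 :=
  (eventually_forall_expSum_neg hβ hcβ hw hK).mono fun s hs z hz => by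
    simpa using hs z hz 0 (by simp)

theorem exists_forall_expSum_add_smul_neg {β₁ β₂ v w : Fin n → ℝ} (hβ₁ : β₁ ∈ S)
    (hcβ₁ : c β₁ < 0) (hβ₂ : β₂ ∈ S) (hcβ₂ : c β₂ < 0)
    (hv₁ : ∀ μ ∈ S, 0 < c μ → v ⬝ᵥ μ ≤ v ⬝ᵥ β₁) (hv₂ : ∀ μ ∈ S, 0 < c μ → v ⬝ᵥ β₂ ≤ v ⬝ᵥ μ)
    (hw₁ : ∀ μ ∈ S, 0 < c μ → w ⬝ᵥ μ < w ⬝ᵥ β₁) (hw₂ : ∀ μ ∈ S, 0 < c μ → w ⬝ᵥ μ < w ⬝ᵥ β₂)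
    {K : Set (Fin n → ℝ)} (hK : IsCompact K) :
    ∃ s : ℝ, ∀ z ∈ K, ∀ t : ℝ, expSum S c (z + s • w + t • v) < 0 := by
  obtain ⟨s, h₁, h₂⟩ := ((eventually_forall_expSum_neg hβ₁ hcβ₁ hw₁ hK).and
    (eventually_forall_expSum_neg hβ₂ hcβ₂ hw₂ hK)).exists
  refine ⟨s, fun z hz t => ?_⟩
  rcases le_total 0 t with ht | ht
  · refine h₁ z hz _ fun μ hμ hcμ => ?_
    simpa only [smul_dotProduct, smul_eq_mul] using mul_le_mul_of_nonneg_left (hv₁ μ hμ hcμ) ht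
  · refine h₂ z hz _ fun μ hμ hcμ => ?_
    simpa only [smul_dotProduct, smul_eq_mul] using mul_le_mul_of_nonpos_left (hv₂ μ hμ hcμ) ht

end LogCoordinates

theorem stmt_9_general (n : ℕ) (S : Finset (Fin n → ℝ)) (c : (Fin n → ℝ) → ℝ)
    (v : Fin n → ℝ) (a b : ℝ) (hab : b ≤ a)
    (hpos : sigPosSet S c ⊆ Hminus v a ∩ Hplus v b)
    (hneg : sigNegSet S c ⊆ (HminusO v a ∩ HplusO v b)ᶜ)
    (hstricta : (sigNegSet S c ∩ HplusO v a).Nonempty)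
    (hstrictb : (sigNegSet S c ∩ HminusO v b).Nonempty)
    (β₁ β₂ : Fin n → ℝ) (hβ₁ : β₁ ∈ sigNegSet S c) (hβ₂ : β₂ ∈ sigNegSet S c)
    (hβ₁a : β₁ ∈ Hplus v a) (hβ₂b : β₂ ∈ Hminus v b)
    (hdisj : convexHull ℝ {β₁, β₂} ∩ convexHull ℝ (sigPosSet S c) = ∅) :
    IsConnected (negSet S c) := by
  obtain ⟨γ₁, ⟨hγ₁, hcγ₁⟩, hγ₁a⟩ := hstricta
  obtain ⟨γ₂, ⟨hγ₂, hcγ₂⟩, hγ₂b⟩ := hstrictb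
  obtain ⟨w, hw⟩ := exists_dotProduct_lt_of_disjoint_convexHull
    (S.finite_toSet.subset fun μ (hμ : μ ∈ sigPosSet S c) => hμ.1) (Set.toFinite {β₁, β₂})
    (by rwa [Set.disjoint_iff_inter_eq_empty, Set.inter_comm])
  have hva : ∀ μ ∈ S, 0 < c μ → v ⬝ᵥ μ ≤ a := fun μ hμ hcμ => (hpos ⟨hμ, hcμ⟩).1
  have hvb : ∀ μ ∈ S, 0 < c μ → b ≤ v ⬝ᵥ μ := fun μ hμ hcμ => (hpos ⟨hμ, hcμ⟩).2
  rw [negSet_eq_image]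
  refine (isPathConnected_of_rays (v := v) (w := w) (fun y hy => ?_) ?_ fun K hK => ?_).isConnected
    |>.image _ (continuous_pi fun i => (continuous_apply i).rexp).continuousOn
  · rcases expSum_add_smul_neg_or (coeff_mul_nonpos_of_enclosing hab hpos hneg) hy with h | h
    exacts [⟨v, .inl rfl, h⟩, ⟨-v, .inr rfl, h⟩]
  · rintro u (rfl | rfl) K hK
    · exact eventually_forall_expSum_add_smul_neg hγ₁ hcγ₁
        (fun μ hμ hcμ => (hva μ hμ hcμ).trans_lt hγ₁a) hK
    · refine eventually_forall_expSum_add_smul_neg hγ₂ hcγ₂ (fun μ hμ hcμ => ?_) hK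
      have : v ⬝ᵥ γ₂ < v ⬝ᵥ μ := hγ₂b.trans_le (hvb μ hμ hcμ)
      simpa only [neg_dotProduct, neg_lt_neg_iff] using this
  · exact exists_forall_expSum_add_smul_neg hβ₁.1 hβ₁.2 hβ₂.1 hβ₂.2
      (fun μ hμ hcμ => (hva μ hμ hcμ).trans hβ₁a) (fun μ hμ hcμ => hβ₂b.trans (hvb μ hμ hcμ))
      (fun μ hμ hcμ => hw μ ⟨hμ, hcμ⟩ β₁ (.inl rfl)) (fun μ hμ hcμ => hw μ ⟨hμ, hcμ⟩ β₂ (.inr rfl))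
      hK

/-- Theorem 2.14. -/
theorem stmt_9 (n : ℕ) (S : Finset (Fin n → ℝ)) (c : (Fin n → ℝ) → ℝ)
    (hc : ∀ μ ∈ S, c μ ≠ 0)
    (v : Fin n → ℝ) (hv : v ≠ 0) (a b : ℝ) (hab : b ≤ a)
    (hpos : sigPosSet S c ⊆ Hminus v a ∩ Hplus v b)
    (hneg : sigNegSet S c ⊆ (HminusO v a ∩ HplusO v b)ᶜ)
    (hstricta : (sigNegSet S c ∩ HplusO v a).Nonempty)
    (hstrictb : (sigNegSet S c ∩ HminusO v b).Nonempty)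
    (β₁ β₂ : Fin n → ℝ) (hβ₁ : β₁ ∈ sigNegSet S c) (hβ₂ : β₂ ∈ sigNegSet S c)
    (hβ₁a : β₁ ∈ Hplus v a) (hβ₂b : β₂ ∈ Hminus v b)
    (hdisj : convexHull ℝ {β₁, β₂} ∩ convexHull ℝ (sigPosSet S c) = ∅) :
    IsConnected (negSet S c) :=
  stmt_9_general n S c v a b hab hpos hneg hstricta hstrictb β₁ β₂ hβ₁ hβ₂ hβ₁a hβ₂b hdisj
end

section
/- Let f : ℝ_{>0}^n → ℝ, f(x) = ∑_{μ ∈ σ(f)} c_μ x^μ be a signomial. If there exists a face F of the Newton polytope N(f) such that σ_-(f) ⊆ F, then the number of connected components of f^{-1}(ℝ_{<0}) equals the number of connected components of f|_F^{-1}(ℝ_{<0}). -/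
open Finset

/-!
Let `v` be a normal vector of the face `F` and `a` the maximum of `⟨v, μ⟩` over the support.
Under the torus action `x ↦ t^v · x` the monomial `x^μ` gets multiplied by `t^⟨v, μ⟩`, so `f|_F`
is multiplied by `t^a`, while every other monomial has a positive coefficient and grows strictly
slower. Hence `f⁻¹(ℝ_{<0}) ⊆ f|_F⁻¹(ℝ_{<0})`, both sets are invariant under the action for
`t ≥ 1`, and for large `t` the action pushes any compact subset of the larger set into the smaller
one. Applied to single points this shows that every component of the larger set meets the smaller
one; applied to paths, that two components of the smaller set lying in one component of the larger
set coincide.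
-/

open Set Filter Topology

theorem Finset.exists_pos_forall_le_sub {ι : Type*} {s : Finset ι} {p : ι → Prop} {f : ι → ℝ}
    {a : ℝ} (h : ∀ i ∈ s, p i → f i < a) : ∃ ε > 0, ∀ i ∈ s, p i → f i ≤ a - ε := by
  have hnhds : ∀ᶠ ε in 𝓝 (0 : ℝ), ∀ i ∈ s, p i → f i ≤ a - ε := by
    refine (eventually_all_finset s).2 fun i hi => ?_
    by_cases hp : p i
    · filter_upwards [eventually_lt_nhds (sub_pos.2 (h i hi hp))] with ε hε _
      linarith
    · exact Eventually.of_forall fun _ hp' => absurd hp' hp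
  exact (eventually_mem_nhdsWithin.and (nhdsWithin_le_nhds (s := Set.Ioi 0) hnhds)).exists

theorem IsCompact.eventually_forall_add_mul_neg {Z : Type*} [TopologicalSpace Z] {K : Set Z}
    (hK : IsCompact K) {f g : Z → ℝ} (hf : ∀ x ∈ K, ContinuousAt f x)
    (hg : ∀ x ∈ K, ContinuousAt g x) (hneg : ∀ x ∈ K, f x < 0) :
    ∀ᶠ s in 𝓝 (0 : ℝ), ∀ x ∈ K, f x + s * g x < 0 := by
  refine hK.eventually_forall_of_forall_eventually fun x hx => ?_
  have hcont : ContinuousAt (fun p : ℝ × Z => f p.2 + p.1 * g p.2) (0, x) :=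
    ((hf x hx).comp continuousAt_snd).add
      (continuousAt_fst.mul ((hg x hx).comp continuousAt_snd))
  exact hcont.eventually_lt continuousAt_const (by simpa using hneg x hx)

section Flow

variable {E : Type*} [TopologicalSpace E] {φ : ℝ → E → E} {X Y : Set E}

theorem connectedComponentIn_flow_eq (hφ₁ : ∀ x, φ 1 x = x)
    (hφt : ∀ x, ContinuousOn (φ · x) (Ici 1)) (hX : ∀ t ≥ 1, MapsTo (φ t) X X)
    {x : E} (hx : x ∈ X) {t : ℝ} (ht : 1 ≤ t) :
    connectedComponentIn X (φ t x) = connectedComponentIn X x := by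
  have hP : IsPreconnected ((φ · x) '' Icc 1 t) :=
    isPreconnected_Icc.image _ ((hφt x).mono Icc_subset_Ici_self)
  have hPX : (φ · x) '' Icc 1 t ⊆ X := by
    rintro _ ⟨s, hs, rfl⟩
    exact hX s hs.1 hx
  exact (connectedComponentIn_eq (hP.subset_connectedComponentIn
    ⟨1, ⟨le_rfl, ht⟩, hφ₁ x⟩ hPX ⟨t, ⟨ht, le_rfl⟩, rfl⟩)).symm

theorem connectedComponentIn_eq_of_flow [LocallyPathConnectedSpace E] (hXY : X ⊆ Y)
    (hY : IsOpen Y) (hφ₁ : ∀ x, φ 1 x = x) (hφt : ∀ x, ContinuousOn (φ · x) (Ici 1))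
    (hφx : ∀ t, Continuous (φ t)) (hX : ∀ t ≥ 1, MapsTo (φ t) X X)
    (hK : ∀ K ⊆ Y, IsCompact K → ∃ t ≥ 1, MapsTo (φ t) K X) {x y : E} (hx : x ∈ X)
    (hy : y ∈ X) (hxy : connectedComponentIn Y x = connectedComponentIn Y y) :
    connectedComponentIn X x = connectedComponentIn X y := by
  have hpath : IsPathConnected (connectedComponentIn Y x) :=
    hY.connectedComponentIn.isConnected_iff_isPathConnected.1
      (isConnected_connectedComponentIn_iff.2 (hXY hx))
  have hjoin : JoinedIn Y x y :=
    (hpath.joinedIn x (mem_connectedComponentIn (hXY hx)) y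
      (hxy ▸ mem_connectedComponentIn (hXY hy))).mono (connectedComponentIn_subset _ _)
  let γ := hjoin.somePath
  obtain ⟨t, ht, hγt⟩ :=
    hK (range γ) (range_subset_iff.2 hjoin.somePath_mem) (isCompact_range γ.continuous)
  have hP : IsPreconnected (φ t '' range γ) :=
    (isPreconnected_range γ.continuous).image _ (hφx t).continuousOn
  have hxyt : connectedComponentIn X (φ t x) = connectedComponentIn X (φ t y) :=
    connectedComponentIn_eq (hP.subset_connectedComponentIn ⟨x, ⟨0, γ.source⟩, rfl⟩
      hγt.image_subset ⟨y, ⟨1, γ.target⟩, rfl⟩)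
  rwa [connectedComponentIn_flow_eq hφ₁ hφt hX hx ht,
    connectedComponentIn_flow_eq hφ₁ hφt hX hy ht] at hxyt

end Flow

section ComponentCount

variable {n : ℕ}

theorem isConnComp_iff {X U : Set (Fin n → ℝ)} :
    IsConnComp X U ↔ ∃ x ∈ X, U = connectedComponentIn X x := by
  constructor
  · rintro ⟨⟨x, hx⟩, hsub, hpre, hmax⟩
    exact ⟨x, hsub hx, (hmax _ (hpre.subset_connectedComponentIn hx hsub)
      (connectedComponentIn_subset _ _) isPreconnected_connectedComponentIn).symm⟩
  · rintro ⟨x, hx, rfl⟩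
    exact ⟨⟨x, mem_connectedComponentIn hx⟩, connectedComponentIn_subset _ _,
      isPreconnected_connectedComponentIn, fun W hUW hWX hW => subset_antisymm
        (hW.subset_connectedComponentIn (hUW (mem_connectedComponentIn hx)) hWX) hUW⟩

theorem IsConnComp.eq_connectedComponentIn {X U : Set (Fin n → ℝ)} (h : IsConnComp X U)
    {x : Fin n → ℝ} (hx : x ∈ U) : U = connectedComponentIn X x := by
  obtain ⟨y, -, rfl⟩ := isConnComp_iff.1 h
  exact connectedComponentIn_eq hx

theorem compCard_eq_of_subset {X Y : Set (Fin n → ℝ)} (hXY : X ⊆ Y)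
    (hinj : ∀ x ∈ X, ∀ y ∈ X, connectedComponentIn Y x = connectedComponentIn Y y →
      connectedComponentIn X x = connectedComponentIn X y)
    (hsurj : ∀ y ∈ Y, ∃ x ∈ X, connectedComponentIn Y x = connectedComponentIn Y y) :
    compCard X = compCard Y := by
  refine Cardinal.mk_congr (Equiv.ofBijective
    (fun U => ⟨connectedComponentIn Y U.2.1.some,
      isConnComp_iff.2 ⟨_, hXY (U.2.2.1 U.2.1.some_mem), rfl⟩⟩) ⟨fun U₁ U₂ h => ?_, ?_⟩)
  · have hp₁ : U₁.2.1.some ∈ U₁.1 := U₁.2.1.some_mem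
    have hp₂ : U₂.2.1.some ∈ U₂.1 := U₂.2.1.some_mem
    exact Subtype.ext ((U₁.2.eq_connectedComponentIn hp₁).trans
      ((hinj _ (U₁.2.2.1 hp₁) _ (U₂.2.2.1 hp₂) (congrArg Subtype.val h)).trans
        (U₂.2.eq_connectedComponentIn hp₂).symm))
  · rintro ⟨W, hW⟩
    obtain ⟨y, hy, rfl⟩ := isConnComp_iff.1 hW
    obtain ⟨x, hx, hxy⟩ := hsurj y hy
    have hU : IsConnComp X (connectedComponentIn X x) := isConnComp_iff.2 ⟨x, hx, rfl⟩
    refine ⟨⟨_, hU⟩, Subtype.ext ?_⟩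
    exact (connectedComponentIn_eq (connectedComponentIn_mono x hXY hU.1.some_mem)).symm.trans hxy

theorem compCard_eq_of_flow {X Y : Set (Fin n → ℝ)} {φ : ℝ → (Fin n → ℝ) → Fin n → ℝ}
    (hXY : X ⊆ Y) (hY : IsOpen Y) (hφ₁ : ∀ x, φ 1 x = x)
    (hφt : ∀ x, ContinuousOn (φ · x) (Ici 1)) (hφx : ∀ t, Continuous (φ t))
    (hX : ∀ t ≥ 1, MapsTo (φ t) X X) (hYφ : ∀ t ≥ 1, MapsTo (φ t) Y Y)
    (hK : ∀ K ⊆ Y, IsCompact K → ∃ t ≥ 1, MapsTo (φ t) K X) :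
    compCard X = compCard Y := by
  refine compCard_eq_of_subset hXY
    (fun x hx y hy => connectedComponentIn_eq_of_flow hXY hY hφ₁ hφt hφx hX hK hx hy)
    fun y hy => ?_
  obtain ⟨t, ht, hyt⟩ := hK {y} (singleton_subset_iff.2 hy) isCompact_singleton
  exact ⟨φ t y, hyt rfl, connectedComponentIn_flow_eq hφ₁ hφt hYφ hy ht⟩

end ComponentCount

section Signomial

variable {n : ℕ} {S : Finset (Fin n → ℝ)} {c : (Fin n → ℝ) → ℝ} {F : Set (Fin n → ℝ)}
  {v : Fin n → ℝ} {a : ℝ}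

theorem exists_forall_dotProduct_le_and_mem_faceOf_iff (S : Finset (Fin n → ℝ))
    (v : Fin n → ℝ) :
    ∃ a, (∀ μ ∈ S, v ⬝ᵥ μ ≤ a) ∧ ∀ μ ∈ S, μ ∈ faceOf S v ↔ v ⬝ᵥ μ = a := by
  rcases S.eq_empty_or_nonempty with rfl | hS
  · exact ⟨0, by simp, by simp⟩
  obtain ⟨μ₀, hμ₀, hmax⟩ := S.exists_max_image (v ⬝ᵥ ·) hS
  have hhull : ∀ ω ∈ convexHull ℝ (S : Set (Fin n → ℝ)), v ⬝ᵥ ω ≤ v ⬝ᵥ μ₀ := fun ω hω =>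
    convexHull_min (fun μ hμ => hmax μ hμ)
      (convex_halfSpace_le ⟨dotProduct_add v, fun r w => dotProduct_smul r v w⟩ _) hω
  refine ⟨v ⬝ᵥ μ₀, hmax, fun μ hμ => ⟨fun h => ?_, fun h => ?_⟩⟩
  · exact (hmax μ hμ).antisymm (h.2 μ₀ (subset_convexHull ℝ _ hμ₀))
  · exact ⟨subset_convexHull ℝ _ hμ, fun ω hω => (hhull ω hω).trans_eq h.symm⟩

noncomputable def rescale (v : Fin n → ℝ) (t : ℝ) (x : Fin n → ℝ) : Fin n → ℝ :=
  fun i => x i * t ^ v i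

theorem rescale_one (v x : Fin n → ℝ) : rescale v 1 x = x := by
  funext i
  simp [rescale]

theorem rescale_pos {t : ℝ} (ht : 0 < t) {x : Fin n → ℝ} (hx : ∀ i, 0 < x i) (i : Fin n) :
    0 < rescale v t x i :=
  mul_pos (hx i) (Real.rpow_pos_of_pos ht _)

theorem continuous_rescale (v : Fin n → ℝ) (t : ℝ) : Continuous (rescale v t) :=
  continuous_pi fun i => (continuous_apply i).mul continuous_const

theorem continuousOn_rescale (v x : Fin n → ℝ) :
    ContinuousOn (fun t => rescale v t x) (Set.Ici 1) :=
  continuousOn_pi.2 fun i => continuousOn_const.mul fun t ht =>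
    (Real.continuousAt_rpow_const t (v i)
      (Or.inl (zero_lt_one.trans_le ht).ne')).continuousWithinAt

theorem prod_rescale_rpow {t : ℝ} (ht : 0 < t) {x : Fin n → ℝ} (hx : ∀ i, 0 < x i)
    (μ : Fin n → ℝ) :
    ∏ i, rescale v t x i ^ μ i = t ^ (v ⬝ᵥ μ) * ∏ i, x i ^ μ i := by
  rw [dotProduct, Real.rpow_sum_of_pos ht, ← Finset.prod_mul_distrib]
  refine Finset.prod_congr rfl fun i _ => ?_
  rw [rescale, Real.mul_rpow (hx i).le (Real.rpow_pos_of_pos ht _).le, ← Real.rpow_mul ht.le,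
    mul_comm]

theorem continuousAt_sig (S : Finset (Fin n → ℝ)) (c : (Fin n → ℝ) → ℝ) {x : Fin n → ℝ}
    (hx : ∀ i, 0 < x i) : ContinuousAt (sig S c) x := by
  exact tendsto_finsetSum _ fun μ _ => (tendsto_finsetProd _ fun i _ =>
    (continuous_apply i).continuousAt.rpow_const (Or.inl (hx i).ne')).const_mul (c μ)

open Classical in
theorem sigOn_eq_sig (S : Finset (Fin n → ℝ)) (c : (Fin n → ℝ) → ℝ) (F : Set (Fin n → ℝ)) :
    sigOn S c F = sig S (fun μ => if μ ∈ F then c μ else 0) := by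
  funext x
  refine Finset.sum_congr rfl fun μ _ => ?_
  split_ifs with h <;> simp [h]

theorem continuousAt_sigOn (S : Finset (Fin n → ℝ)) (c : (Fin n → ℝ) → ℝ)
    (F : Set (Fin n → ℝ)) {x : Fin n → ℝ} (hx : ∀ i, 0 < x i) :
    ContinuousAt (sigOn S c F) x := by
  classical
  rw [sigOn_eq_sig]
  exact continuousAt_sig S _ hx

theorem isOpen_negSetOn (S : Finset (Fin n → ℝ)) (c : (Fin n → ℝ) → ℝ) (F : Set (Fin n → ℝ)) :
    IsOpen (negSetOn S c F) := by
  refine isOpen_iff_mem_nhds.2 fun x hx => ?_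
  have hpos : ∀ᶠ y in 𝓝 x, ∀ i, 0 < y i :=
    eventually_all.2 fun i =>
      continuousAt_const.eventually_lt (continuous_apply i).continuousAt (hx.1 i)
  exact hpos.and ((continuousAt_sigOn S c F hx.1).eventually_lt continuousAt_const hx.2)

theorem prod_rpow_pos {x : Fin n → ℝ} (hx : ∀ i, 0 < x i) (μ : Fin n → ℝ) :
    0 < ∏ i, x i ^ μ i :=
  Finset.prod_pos fun i _ => Real.rpow_pos_of_pos (hx i) _

theorem sigOn_le_sig (hpos : ∀ μ ∈ S, μ ∉ F → 0 < c μ) {x : Fin n → ℝ} (hx : ∀ i, 0 < x i) :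
    sigOn S c F x ≤ sig S c x := by
  refine Finset.sum_le_sum fun μ hμ => ?_
  split_ifs with h
  · exact le_rfl
  · exact (mul_pos (hpos μ hμ h) (prod_rpow_pos hx μ)).le

theorem negSet_subset_negSetOn (hpos : ∀ μ ∈ S, μ ∉ F → 0 < c μ) :
    negSet S c ⊆ negSetOn S c F :=
  fun _ hx => ⟨hx.1, (sigOn_le_sig hpos hx.1).trans_lt hx.2⟩

theorem sigOn_rescale (hF : ∀ μ ∈ S, μ ∈ F → v ⬝ᵥ μ = a) {t : ℝ} (ht : 0 < t)
    {x : Fin n → ℝ} (hx : ∀ i, 0 < x i) :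
    sigOn S c F (rescale v t x) = t ^ a * sigOn S c F x := by
  rw [sigOn, sigOn, Finset.mul_sum]
  refine Finset.sum_congr rfl fun μ hμ => ?_
  split_ifs with h
  · rw [prod_rescale_rpow ht hx, hF μ hμ h]
    ring
  · simp

theorem sig_rescale_le {ε : ℝ} (hF : ∀ μ ∈ S, μ ∈ F → v ⬝ᵥ μ = a)
    (hgap : ∀ μ ∈ S, μ ∉ F → v ⬝ᵥ μ ≤ a - ε) (hpos : ∀ μ ∈ S, μ ∉ F → 0 < c μ)
    {t : ℝ} (ht : 1 ≤ t) {x : Fin n → ℝ} (hx : ∀ i, 0 < x i) :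
    sig S c (rescale v t x) ≤ t ^ a * (sigOn S c F x + t ^ (-ε) * (sig S c x - sigOn S c F x)) := by
  classical
  have ht0 : 0 < t := one_pos.trans_le ht
  have hsplit : sigOn S c F x + t ^ (-ε) * (sig S c x - sigOn S c F x)
      = ∑ μ ∈ S, (if μ ∈ F then 1 else t ^ (-ε)) * (c μ * ∏ i, x i ^ μ i) := by
    simp only [sig, sigOn, ← Finset.sum_sub_distrib, Finset.mul_sum, ← Finset.sum_add_distrib]
    refine Finset.sum_congr rfl fun μ _ => ?_
    split_ifs <;> ring
  rw [hsplit, Finset.mul_sum]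
  refine Finset.sum_le_sum fun μ hμ => ?_
  rw [prod_rescale_rpow ht0 hx]
  split_ifs with h
  · rw [hF μ hμ h]
    exact le_of_eq (by ring)
  · calc c μ * (t ^ (v ⬝ᵥ μ) * ∏ i, x i ^ μ i)
        = t ^ (v ⬝ᵥ μ) * (c μ * ∏ i, x i ^ μ i) := by ring
      _ ≤ t ^ (a - ε) * (c μ * ∏ i, x i ^ μ i) :=
        mul_le_mul_of_nonneg_right (Real.rpow_le_rpow_of_exponent_le ht (hgap μ hμ h))
          (mul_pos (hpos μ hμ h) (prod_rpow_pos hx μ)).le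
      _ = t ^ a * (t ^ (-ε) * (c μ * ∏ i, x i ^ μ i)) := by
        rw [sub_eq_add_neg, Real.rpow_add ht0]
        ring

theorem mapsTo_rescale_negSet (hF : ∀ μ ∈ S, μ ∈ F → v ⬝ᵥ μ = a)
    (hle : ∀ μ ∈ S, μ ∉ F → v ⬝ᵥ μ ≤ a) (hpos : ∀ μ ∈ S, μ ∉ F → 0 < c μ) {t : ℝ}
    (ht : 1 ≤ t) : MapsTo (rescale v t) (negSet S c) (negSet S c) := by
  rintro x ⟨hx, hneg⟩
  have ht0 : 0 < t := one_pos.trans_le ht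
  refine ⟨rescale_pos ht0 hx,
    (sig_rescale_le (ε := 0) hF (by simpa using hle) hpos ht hx).trans_lt ?_⟩
  simpa using mul_neg_of_pos_of_neg (Real.rpow_pos_of_pos ht0 a) hneg

theorem mapsTo_rescale_negSetOn (hF : ∀ μ ∈ S, μ ∈ F → v ⬝ᵥ μ = a) {t : ℝ} (ht : 0 < t) :
    MapsTo (rescale v t) (negSetOn S c F) (negSetOn S c F) := by
  rintro x ⟨hx, hneg⟩
  refine ⟨rescale_pos ht hx, ?_⟩
  rw [sigOn_rescale hF ht hx]
  exact mul_neg_of_pos_of_neg (Real.rpow_pos_of_pos ht a) hneg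

theorem exists_mapsTo_rescale_negSet {ε : ℝ} (hF : ∀ μ ∈ S, μ ∈ F → v ⬝ᵥ μ = a)
    (hgap : ∀ μ ∈ S, μ ∉ F → v ⬝ᵥ μ ≤ a - ε) (hε : 0 < ε) (hpos : ∀ μ ∈ S, μ ∉ F → 0 < c μ)
    {K : Set (Fin n → ℝ)} (hKY : K ⊆ negSetOn S c F) (hK : IsCompact K) :
    ∃ t ≥ 1, MapsTo (rescale v t) K (negSet S c) := by
  have hsmall := hK.eventually_forall_add_mul_neg (g := fun x => sig S c x - sigOn S c F x)
    (fun x hx => continuousAt_sigOn S c F (hKY hx).1)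
    (fun x hx => (continuousAt_sig S c (hKY hx).1).sub (continuousAt_sigOn S c F (hKY hx).1))
    (fun x hx => (hKY hx).2)
  obtain ⟨t, hKt, ht⟩ :=
    (((tendsto_rpow_neg_atTop hε).eventually hsmall).and (eventually_ge_atTop 1)).exists
  have ht0 : 0 < t := one_pos.trans_le ht
  refine ⟨t, ht, fun x hx => ⟨rescale_pos ht0 (hKY hx).1, ?_⟩⟩
  exact (sig_rescale_le hF hgap hpos ht (hKY hx).1).trans_lt
    (mul_neg_of_pos_of_neg (Real.rpow_pos_of_pos ht0 a) (hKt x hx))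

end Signomial

/-- Theorem 3.1: if all negative exponent vectors lie on a face `F` of the Newton polytope,
then `f⁻¹(ℝ_{<0})` and `(f|_F)⁻¹(ℝ_{<0})` have the same number of connected components. -/
theorem stmt_12 (n : ℕ) (S : Finset (Fin n → ℝ)) (c : (Fin n → ℝ) → ℝ)
    (hc : ∀ μ ∈ S, c μ ≠ 0)
    (F : Set (Fin n → ℝ)) (hF : ∃ v : Fin n → ℝ, F = faceOf S v)
    (hneg : sigNegSet S c ⊆ F) :
    compCard (negSet S c) = compCard (negSetOn S c F) := by
  obtain ⟨v, rfl⟩ := hF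
  obtain ⟨a, hle, hface⟩ := exists_forall_dotProduct_le_and_mem_faceOf_iff S v
  have hpos : ∀ μ ∈ S, μ ∉ faceOf S v → 0 < c μ := fun μ hμ hμF =>
    (hc μ hμ).lt_or_gt.resolve_left fun h => hμF (hneg ⟨hμ, h⟩)
  have hlt : ∀ μ ∈ S, μ ∉ faceOf S v → v ⬝ᵥ μ < a := fun μ hμ hμF =>
    (hle μ hμ).lt_of_ne (mt (hface μ hμ).2 hμF)
  obtain ⟨ε, hε, hgap⟩ := Finset.exists_pos_forall_le_sub hlt
  have hF : ∀ μ ∈ S, μ ∈ faceOf S v → v ⬝ᵥ μ = a := fun μ hμ => (hface μ hμ).1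
  exact compCard_eq_of_flow (negSet_subset_negSetOn hpos) (isOpen_negSetOn S c _)
    (rescale_one v) (continuousOn_rescale v) (continuous_rescale v)
    (fun t ht => mapsTo_rescale_negSet hF (fun μ hμ hμF => (hlt μ hμ hμF).le) hpos ht)
    (fun t ht => mapsTo_rescale_negSetOn hF (one_pos.trans_le ht))
    (fun K hKY hK => exists_mapsTo_rescale_negSet hF hgap hε hpos hKY hK)
end
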